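/- arXiv:1812.03445 — 4 statements merged into one kernel-verified Lean document; each statement's English description precedes it below -/
import Mathlib

section
/- Let X₀, X₁, …, X_ℓ be elements of a module over a polynomial ring in q satisfying X_z + q·X_{z+2} = (1+q)·X_{z+1} for all 0 ≤ z ≤ ℓ−2. Then for every 1 ≤ k ≤ ℓ−1, [ℓ−k]_q·X_0 + q^{ℓ−k}·[k]_q·X_ℓ = [ℓ]_q·X_k. -/
/-!
Differences `d z = X (z+1) - X z` satisfy `d z = q • d (z+1)`, so all of them are multiples of the
last one, `d z = q ^ (ℓ-1-z) • d (ℓ-1)`. Summing, `X n - X 0 = q ^ (ℓ-n) [n]_q • d (ℓ-1)`; comparing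
`n = k` with `n = ℓ` and splitting `[ℓ]_q = [ℓ-k]_q + q ^ (ℓ-k) [k]_q` gives the relation.
-/

noncomputable def qint (R : Type*) [CommRing R] (n : ℕ) : Polynomial R :=
  ∑ i ∈ Finset.range n, Polynomial.X ^ i

open Finset

theorem geom_sum_add {A : Type*} [Semiring A] (q : A) (a b : ℕ) :
    ∑ i ∈ range (a + b), q ^ i = ∑ i ∈ range a, q ^ i + q ^ a * ∑ i ∈ range b, q ^ i := by
  simp only [sum_range_add, mul_sum, pow_add]

section Recurrence

variable {A M : Type*} [CommRing A] [AddCommGroup M] [Module A M] {q : A}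

theorem eq_pow_smul_of_eq_smul_succ {d : ℕ → M} {n : ℕ} (h : ∀ z < n, d z = q • d (z + 1))
    {z : ℕ} (hz : z ≤ n) : d z = q ^ (n - z) • d n := by
  induction hz using Nat.decreasingInduction with
  | self => simp
  | of_succ z hz ih =>
    rw [h z hz, ih, smul_smul, ← pow_succ', Nat.sub_add_eq, Nat.sub_add_cancel (by omega)]

variable {X : ℕ → M} {ℓ : ℕ}
  (hrec : ∀ z, z + 2 ≤ ℓ → X z + q • X (z + 2) = (1 + q) • X (z + 1))
include hrec

theorem sub_eq_pow_smul_last_sub_of_recurrence {z : ℕ} (hz : z < ℓ) :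
    X (z + 1) - X z = q ^ (ℓ - 1 - z) • (X ℓ - X (ℓ - 1)) := by
  have hstep : ∀ z < ℓ - 1, X (z + 1) - X z = q • (X (z + 1 + 1) - X (z + 1)) := fun z hz ↦ by
    linear_combination (norm := module) -hrec z (by omega)
  have hlast :=
    eq_pow_smul_of_eq_smul_succ (d := fun z ↦ X (z + 1) - X z) hstep (by omega : z ≤ ℓ - 1)
  rwa [Nat.sub_add_cancel (by omega : 1 ≤ ℓ)] at hlast

theorem sub_zero_eq_geom_smul_of_recurrence {n : ℕ} (hn : n ≤ ℓ) :
    X n - X 0 = (q ^ (ℓ - n) * ∑ i ∈ range n, q ^ i) • (X ℓ - X (ℓ - 1)) := by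
  induction n with
  | zero => simp
  | succ n ih =>
    have hpow : q ^ (ℓ - n) = q ^ (ℓ - (n + 1)) * q := by
      rw [← pow_succ, Nat.sub_add_eq, Nat.sub_add_cancel (by omega)]
    calc X (n + 1) - X 0 = (X (n + 1) - X n) + (X n - X 0) := by abel
      _ = _ := by
        rw [sub_eq_pow_smul_last_sub_of_recurrence hrec (by omega), ih (by omega), ← add_smul,
          geom_sum_succ, hpow, Nat.sub_sub]
        ring_nf

theorem geom_smul_sub_zero_of_recurrence {k : ℕ} (hk : k ≤ ℓ) :
    (∑ i ∈ range ℓ, q ^ i) • (X k - X 0) =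
      (q ^ (ℓ - k) * ∑ i ∈ range k, q ^ i) • (X ℓ - X 0) := by
  rw [sub_zero_eq_geom_smul_of_recurrence hrec hk,
    sub_zero_eq_geom_smul_of_recurrence hrec le_rfl, Nat.sub_self, smul_smul, smul_smul, pow_zero,
    one_mul, mul_comm]

end Recurrence

/-- If elements `X 0, …, X ℓ` of a module over the polynomial ring `R[q]` satisfy
`X z + q • X (z+2) = (1+q) • X (z+1)` for all `0 ≤ z ≤ ℓ−2`, then for every
`1 ≤ k ≤ ℓ−1`, `[ℓ−k]_q • X 0 + (q^{ℓ−k}·[k]_q) • X ℓ = [ℓ]_q • X k`. -/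
theorem chain_linear_relation_endpoints {R M : Type*} [CommRing R] [AddCommGroup M]
    [Module (Polynomial R) M] (ℓ : ℕ) (X : ℕ → M)
    (hrec : ∀ z, z + 2 ≤ ℓ →
      X z + (Polynomial.X : Polynomial R) • X (z + 2) = ((1 + Polynomial.X : Polynomial R)) • X (z + 1)) :
    ∀ k, 1 ≤ k → k ≤ ℓ - 1 →
      (qint R (ℓ - k)) • X 0 + ((Polynomial.X : Polynomial R) ^ (ℓ - k) * qint R k) • X ℓ
        = (qint R ℓ) • X k := by
  intro k _ hk
  have hrel : qint R ℓ • (X k - X 0) = (Polynomial.X ^ (ℓ - k) * qint R k) • (X ℓ - X 0) :=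
    geom_smul_sub_zero_of_recurrence hrec (by omega)
  have hsplit : qint R ℓ = qint R (ℓ - k) + Polynomial.X ^ (ℓ - k) * qint R k := by
    rw [qint, qint, qint, ← geom_sum_add, Nat.sub_add_cancel (by omega)]
  rw [hsplit] at hrel ⊢
  linear_combination (norm := module) -hrel
end

section
/- Let G be a graph on vertex set {1,…,n} whose edges include three edges e₁, e₂, e₃ forming a triangle. Then the chromatic symmetric functions satisfy X_G = X_{G−e₁} + X_{G−e₂} − X_{G−{e₁,e₂}} (the triple-deletion property). -/
/-!
A coloring proper for both `G − ab` and `G − ac` is proper for `G`, and a coloring proper for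
`G − {ab, ac}` is proper for `G − ab` or for `G − ac`: the edge `bc` forces `κ b ≠ κ c`, so `κ a`
differs from one of them. Hence the proper colorings of `G − {ab, ac}` are the union of those of
`G − ab` and `G − ac`, whose intersection is the proper colorings of `G`, and the identity is
inclusion–exclusion.
-/

open scoped Classical

/-- The chromatic symmetric function of a graph `G` on vertices `{1,…,n}`, in the
variables `x_1,…,x_N`: the sum of `∏_v x_{κ(v)}` over proper colorings `κ`. -/
noncomputable def chromSym (n N : ℕ) (G : SimpleGraph (Fin n)) :
    MvPolynomial (Fin N) ℤ :=
  ∑ κ ∈ Finset.univ.filter (fun κ : Fin n → Fin N =>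
      ∀ u v, G.Adj u v → κ u ≠ κ v),
    ∏ v, MvPolynomial.X (κ v)

namespace SimpleGraph

variable {V α : Type*}

def IsProperColoring (G : SimpleGraph V) (κ : V → α) : Prop :=
  ∀ u v, G.Adj u v → κ u ≠ κ v

theorem IsProperColoring.mono {G H : SimpleGraph V} {κ : V → α} (hG : G.IsProperColoring κ)
    (hHG : H ≤ G) : H.IsProperColoring κ :=
  fun u v huv => hG u v (hHG huv)

theorem IsProperColoring.deleteEdges_of_insert {G : SimpleGraph V} {s : Set (Sym2 V)}
    {u v : V} {κ : V → α} (hκ : (G.deleteEdges (insert s(u, v) s)).IsProperColoring κ)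
    (huv : κ u ≠ κ v) : (G.deleteEdges s).IsProperColoring κ := by
  intro x y hxy
  obtain ⟨hxy, hs⟩ := deleteEdges_adj.1 hxy
  by_cases he : s(x, y) = s(u, v)
  · rcases Sym2.eq_iff.1 he with ⟨rfl, rfl⟩ | ⟨rfl, rfl⟩
    exacts [huv, huv.symm]
  · exact hκ x y (deleteEdges_adj.2 ⟨hxy, by simp [he, hs]⟩)

theorem isProperColoring_deleteEdges_and_iff {G : SimpleGraph V} {s t : Set (Sym2 V)}
    {κ : V → α} (hst : Disjoint s t) :
    (G.deleteEdges s).IsProperColoring κ ∧ (G.deleteEdges t).IsProperColoring κ ↔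
      G.IsProperColoring κ := by
  refine ⟨fun ⟨hs, ht⟩ u v huv => ?_, fun h => ⟨h.mono (deleteEdges_le _),
    h.mono (deleteEdges_le _)⟩⟩
  by_cases he : s(u, v) ∈ s
  · exact ht u v (deleteEdges_adj.2 ⟨huv, hst.notMem_of_mem_left he⟩)
  · exact hs u v (deleteEdges_adj.2 ⟨huv, he⟩)

theorem isProperColoring_deleteEdges_pair_iff {G : SimpleGraph V} {a b c : V} {κ : V → α}
    (hbc : G.Adj b c) (hab : a ≠ b) (hac : a ≠ c) :
    (G.deleteEdges {s(a, b), s(a, c)}).IsProperColoring κ ↔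
      (G.deleteEdges {s(a, b)}).IsProperColoring κ ∨
        (G.deleteEdges {s(a, c)}).IsProperColoring κ := by
  refine ⟨fun h => ?_, fun h => h.elim (·.mono (deleteEdges_anti (by simp)))
    (·.mono (deleteEdges_anti (by simp)))⟩
  have hκbc : κ b ≠ κ c := h b c (deleteEdges_adj.2 ⟨hbc, by simp [hab.symm, hac.symm, hbc.ne]⟩)
  by_cases hκab : κ a = κ b
  · rw [Set.pair_comm] at h
    exact .inl (h.deleteEdges_of_insert (hκab ▸ hκbc))
  · exact .inr (h.deleteEdges_of_insert hκab)

variable [Fintype V] [Fintype α]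

noncomputable def properColorings (G : SimpleGraph V) : Finset (V → α) :=
  Finset.univ.filter G.IsProperColoring

theorem mem_properColorings {G : SimpleGraph V} {κ : V → α} :
    κ ∈ G.properColorings ↔ G.IsProperColoring κ := by
  simp [properColorings]

theorem properColorings_deleteEdges_inter [DecidableEq α] {G : SimpleGraph V} {s t : Set (Sym2 V)}
    (hst : Disjoint s t) :
    (G.deleteEdges s).properColorings ∩ (G.deleteEdges t).properColorings =
      (G.properColorings : Finset (V → α)) := by
  ext κ
  simp only [Finset.mem_inter, mem_properColorings, isProperColoring_deleteEdges_and_iff hst]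

theorem properColorings_deleteEdges_union [DecidableEq α] {G : SimpleGraph V} {a b c : V}
    (hbc : G.Adj b c) (hab : a ≠ b) (hac : a ≠ c) :
    (G.deleteEdges {s(a, b)}).properColorings ∪ (G.deleteEdges {s(a, c)}).properColorings =
      ((G.deleteEdges {s(a, b), s(a, c)}).properColorings : Finset (V → α)) := by
  ext κ
  simp only [Finset.mem_union, mem_properColorings,
    isProperColoring_deleteEdges_pair_iff hbc hab hac]

end SimpleGraph

open SimpleGraph

theorem chromSym_eq_sum_properColorings (n N : ℕ) (G : SimpleGraph (Fin n)) :
    chromSym n N G = ∑ κ ∈ G.properColorings, ∏ v, MvPolynomial.X (κ v) := by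
  unfold chromSym properColorings IsProperColoring
  congr!

/-- Triple-deletion property: if `e₁ = {a,b}`, `e₂ = {a,c}`, `e₃ = {b,c}` are edges of
`G` forming a triangle, then `X_G = X_{G−e₁} + X_{G−e₂} − X_{G−{e₁,e₂}}`. -/
theorem triple_deletion (n N : ℕ) (G : SimpleGraph (Fin n)) (a b c : Fin n)
    (hab : G.Adj a b) (hac : G.Adj a c) (hbc : G.Adj b c) :
    chromSym n N G =
      chromSym n N (G.deleteEdges {s(a, b)}) + chromSym n N (G.deleteEdges {s(a, c)})
        - chromSym n N (G.deleteEdges {s(a, b), s(a, c)}) := by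
  have hdisj : Disjoint ({s(a, b)} : Set (Sym2 (Fin n))) {s(a, c)} :=
    Set.disjoint_singleton.2 (Sym2.congr_right.not.2 hbc.ne)
  have key := Finset.sum_union_inter (s₁ := (G.deleteEdges {s(a, b)}).properColorings)
    (s₂ := (G.deleteEdges {s(a, c)}).properColorings)
    (f := fun κ : Fin n → Fin N => ∏ v, MvPolynomial.X (R := ℤ) (κ v))
  rw [properColorings_deleteEdges_union hbc hab.ne hac.ne,
    properColorings_deleteEdges_inter hdisj] at key
  simp only [chromSym_eq_sum_properColorings]
  linear_combination key
end

section
/- Any two words in D_k are Knuth equivalent; more precisely, every word in D_k can be obtained from the word 1 2 ⋯ (k−1) n (n−1) ⋯ (k+1) k by repeatedly applying the elementary Knuth relation replacing a factor xzy by zxy (or vice versa) whenever x < y < z. -/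
/-- The elementary Knuth relation replacing a factor `x z y` by `z x y` (or vice versa)
whenever `x < y < z`. -/
def KnuthStep (l₁ l₂ : List ℕ) : Prop :=
  ∃ (a b : List ℕ) (x y z : ℕ), x < y ∧ y < z ∧
    ((l₁ = a ++ [x, z, y] ++ b ∧ l₂ = a ++ [z, x, y] ++ b) ∨
     (l₁ = a ++ [z, x, y] ++ b ∧ l₂ = a ++ [x, z, y] ++ b))

/-!
Write a word of `D_k` as `w ++ [k]`, with small letters (`< k`) increasing and large letters
(`> k`) decreasing in `w`. Induct on `w`. A leading small letter is simply kept in front. A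
leading large letter `c` can be carried rightwards through the increasing block of small letters
of the normal form, one move `c x x' ↦ x c x'` at a time, since the letter `y` that follows that
block (the first large letter or `k` itself) satisfies `x < y < c` for every small `x`. Finally the
small and the large letters of the word are forced to be `1, …, k-1` and `n, …, k+1`.
-/

open Relation

namespace KnuthStep

theorem symm {l₁ l₂ : List ℕ} (h : KnuthStep l₁ l₂) : KnuthStep l₂ l₁ := by
  obtain ⟨a, b, x, y, z, hxy, hyz, h | h⟩ := h
  · exact ⟨a, b, x, y, z, hxy, hyz, .inr h.symm⟩
  · exact ⟨a, b, x, y, z, hxy, hyz, .inl h.symm⟩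

instance : Std.Symm KnuthStep := ⟨fun _ _ => symm⟩

theorem append_left (p : List ℕ) {l₁ l₂ : List ℕ} (h : KnuthStep l₁ l₂) :
    KnuthStep (p ++ l₁) (p ++ l₂) := by
  obtain ⟨a, b, x, y, z, hxy, hyz, ⟨rfl, rfl⟩ | ⟨rfl, rfl⟩⟩ := h
  · exact ⟨p ++ a, b, x, y, z, hxy, hyz, .inl ⟨by simp, by simp⟩⟩
  · exact ⟨p ++ a, b, x, y, z, hxy, hyz, .inr ⟨by simp, by simp⟩⟩

theorem cons_cons_cons {x y z : ℕ} (hxy : x < y) (hyz : y < z) (t : List ℕ) :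
    KnuthStep (z :: x :: y :: t) (x :: z :: y :: t) :=
  ⟨[], t, x, y, z, hxy, hyz, .inr ⟨rfl, rfl⟩⟩

theorem reflTransGen_append_left (p : List ℕ) {l₁ l₂ : List ℕ}
    (h : ReflTransGen KnuthStep l₁ l₂) : ReflTransGen KnuthStep (p ++ l₁) (p ++ l₂) :=
  ReflTransGen.lift (p ++ ·) (fun _ _ => append_left p) _ _ h

theorem reflTransGen_cons_append_cons {z y : ℕ} (t : List ℕ) (hyz : y < z) :
    ∀ {A : List ℕ}, A.Pairwise (· < ·) → (∀ a ∈ A, a < y) →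
      ReflTransGen KnuthStep (z :: (A ++ y :: t)) (A ++ z :: y :: t)
  | [], _, _ => .refl
  | x :: A, hA, hAy => by
    rw [List.pairwise_cons] at hA
    have hstep : KnuthStep (z :: x :: (A ++ y :: t)) (x :: z :: (A ++ y :: t)) := by
      cases A with
      | nil => exact cons_cons_cons (hAy x (by simp)) hyz t
      | cons x' A =>
        exact cons_cons_cons (hA.1 x' (by simp)) ((hAy x' (by simp)).trans hyz) _
    exact .head hstep (reflTransGen_append_left [x]
      (reflTransGen_cons_append_cons t hyz hA.2 fun a ha => hAy a (by simp [ha])))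

theorem reflTransGen_append_cons_append_singleton {k c : ℕ} {S D : List ℕ}
    (hS : S.Pairwise (· < ·)) (hSk : ∀ a ∈ S, a < k) (hDk : ∀ d ∈ D, k < d)
    (hDc : ∀ d ∈ D, d < c) (hkc : k < c) :
    ReflTransGen KnuthStep (S ++ c :: D ++ [k]) (c :: (S ++ D ++ [k])) := by
  cases D with
  | nil => simpa using _root_.symm (reflTransGen_cons_append_cons [] hkc hS hSk)
  | cons d D =>
    have hSd : ∀ a ∈ S, a < d := fun a ha => (hSk a ha).trans (hDk d (by simp))
    simpa using _root_.symm (reflTransGen_cons_append_cons (D ++ [k]) (hDc d (by simp)) hS hSd)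

end KnuthStep

theorem reflTransGen_knuthStep_filter_lt_append_filter_gt (k : ℕ) {w : List ℕ} (hk : k ∉ w)
    (hinc : (w.filter (· < k)).Pairwise (· < ·)) (hdec : (w.filter (k < ·)).Pairwise (· > ·)) :
    ReflTransGen KnuthStep (w.filter (· < k) ++ w.filter (k < ·) ++ [k]) (w ++ [k]) := by
  induction w with
  | nil => exact .refl
  | cons c w ih =>
    obtain ⟨hkc, hkw⟩ := List.ne_and_not_mem_of_not_mem_cons hk
    rcases hkc.symm.lt_or_gt with hc | hc <;>
      simp only [List.filter_cons, hc, hc.not_gt, decide_true, decide_false, if_true,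
        Bool.false_eq_true, if_false, List.pairwise_cons] at hinc hdec ⊢
    · exact KnuthStep.reflTransGen_append_left [c] (ih hkw hinc.2 hdec)
    · refine .trans ?_ (KnuthStep.reflTransGen_append_left [c] (ih hkw hinc hdec.2))
      exact KnuthStep.reflTransGen_append_cons_append_singleton hinc
        (fun a ha => of_decide_eq_true (List.mem_filter.mp ha).2)
        (fun d hd => of_decide_eq_true (List.mem_filter.mp hd).2) hdec.1 hc

theorem Dk_knuth_equivalent_general (n k : ℕ) (u : List ℕ)
    (hperm : u.Perm ((List.range n).map (· + 1)))
    (hlast : u.getLast? = some k)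
    (hinc : (u.filter (fun x => x < k)).Pairwise (· < ·))
    (hdec : (u.filter (fun x => k < x)).Pairwise (· > ·)) :
    Relation.ReflTransGen KnuthStep
      (List.range' 1 (k - 1) ++ (List.range' (k + 1) (n - k)).reverse ++ [k]) u := by
  obtain ⟨w, rfl⟩ := List.getLast?_eq_some_iff.mp hlast
  have hrange : (List.range n).map (· + 1) = List.range' 1 n := by
    simp [List.range'_eq_map_range, add_comm]
  rw [hrange] at hperm
  have hmem : ∀ x, x ∈ w ++ [k] ↔ 1 ≤ x ∧ x ≤ n := fun x => by
    rw [hperm.mem_iff, List.mem_range'_1]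
    omega
  have hkn : k ≤ n := ((hmem k).mp (by simp)).2
  have hkw : k ∉ w :=
    (List.nodup_cons.mp (List.nodup_append_comm.mp (hperm.nodup_iff.mpr List.nodup_range'))).1
  have hw : ∀ x, x ∈ w ↔ 1 ≤ x ∧ x ≤ n ∧ x ≠ k := fun x => by
    have := hmem x
    simp only [List.mem_append, List.mem_singleton] at this
    grind
  simp only [List.filter_append, List.filter_singleton, lt_irrefl, decide_false, cond_false,
    List.append_nil] at hinc hdec
  have hsmall : w.filter (· < k) = List.range' 1 (k - 1) :=
    hinc.eq_of_mem_iff List.pairwise_lt_range' fun x => by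
      simp only [List.mem_filter, hw, List.mem_range'_1, decide_eq_true_eq]
      omega
  have hlarge : w.filter (k < ·) = (List.range' (k + 1) (n - k)).reverse :=
    hdec.sortedGT.eq_reverse_of_mem_iff_of_sortedLT (fun x => by
      simp only [List.mem_filter, hw, List.mem_range'_1, decide_eq_true_eq]
      omega) (List.sortedLT_range' _ _ one_ne_zero)
  rw [← hsmall, ← hlarge]
  exact reflTransGen_knuthStep_filter_lt_append_filter_gt k hkw hinc hdec

/-- Every word in `D_k` — a word of length `n` on the letters `{1,…,n}` ending in `k`
whose restriction to `{1,…,k−1}` is increasing and restriction to `{k+1,…,n}` is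
decreasing — can be obtained from the word `1 2 ⋯ (k−1) n (n−1) ⋯ (k+1) k` by
repeatedly applying the elementary Knuth relation; in particular any two words in `D_k`
are Knuth equivalent. -/
theorem Dk_knuth_equivalent (n k : ℕ) (hk : 1 ≤ k) (hkn : k ≤ n) (u : List ℕ)
    (hperm : u.Perm ((List.range n).map (· + 1)))
    (hlast : u.getLast? = some k)
    (hinc : (u.filter (fun x => x < k)).Pairwise (· < ·))
    (hdec : (u.filter (fun x => k < x)).Pairwise (· > ·)) :
    Relation.ReflTransGen KnuthStep
      (List.range' 1 (k - 1) ++ (List.range' (k + 1) (n - k)).reverse ++ [k]) u :=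
  Dk_knuth_equivalent_general n k u hperm hlast hinc hdec
end

section
/- For any word w of positive integers, the descent set of w equals the descent set of the recording tableau Q(w) under the RSK insertion algorithm: D(w) = D(Q(w)). -/
/-- Insert `x` into a row `r` of a semistandard tableau: either append it at the end,
or bump the leftmost entry strictly larger than `x`. Returns the new row and the
bumped entry (if any). -/
def bumpRow (r : List ℕ) (x : ℕ) : List ℕ × Option ℕ :=
  match r.findIdx? (fun y => x < y) with
  | none => (r ++ [x], none)
  | some i => (r.set i x, some (r.getD i 0))

/-- RSK row insertion of a letter `x` into a tableau (a list of rows). -/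
def insertT : List (List ℕ) → ℕ → List (List ℕ)
  | [], x => [[x]]
  | r :: rs, x =>
    match bumpRow r x with
    | (r', none) => r' :: rs
    | (r', some y) => r' :: insertT rs y

/-- The index of the row in which the shape grew when passing from `P` to `P'`. -/
def newRowIdx (P P' : List (List ℕ)) : ℕ :=
  ((List.range P'.length).filter
    (fun i => (P.getD i []).length ≠ (P'.getD i []).length)).headD 0

/-- Add the entry `t` at the end of row `i` of the recording tableau `Q`. -/
def addEntry (Q : List (List ℕ)) (i t : ℕ) : List (List ℕ) :=
  if i < Q.length then Q.set i ((Q.getD i []) ++ [t]) else Q ++ [[t]]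

/-- Auxiliary RSK recursion carrying the insertion tableau `P`, the recording tableau
`Q` and the next label `t`. -/
def rskAux : List (List ℕ) → List (List ℕ) → ℕ → List ℕ → List (List ℕ)
  | _, Q, _, [] => Q
  | P, Q, t, x :: xs =>
    rskAux (insertT P x) (addEntry Q (newRowIdx P (insertT P x)) t) (t + 1) xs

/-- The standard recording tableau `Q(w)` of the word `w` under RSK insertion. -/
def rskQ (w : List ℕ) : List (List ℕ) := rskAux [] [] 1 w

/-- The (0-based) index of the row of the tableau `Q` containing the entry `v`. -/
def rowOf (Q : List (List ℕ)) (v : ℕ) : ℕ := Q.findIdx (fun r => r.contains v)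

/-!
Inserting a letter creates exactly one new box, and `Q(w)` records the row of the box created
by the `i`-th letter. So the claim is the row bumping lemma: if `x` and then `y` are inserted
into a tableau with weakly increasing rows, the box of `y` lands strictly below that of `x` iff
`y < x`. By induction on the rows: if `x` bumps `u` from the first row and `y` then bumps `v`,
the pair `(u, v)` continues into the rest of the tableau, and `v < u ↔ y < x` because the bumped
entry is the smallest one of its row exceeding the inserted letter. If `x` is appended to the
first row instead, `y` bumps from that row iff `y < x`.
-/

section BumpRow

variable {r : List ℕ} {x u z : ℕ}

theorem bumpRow_cases (r : List ℕ) (x : ℕ) :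
    (bumpRow r x = (r ++ [x], none) ∧ ∀ z ∈ r, z ≤ x) ∨
      ∃ i, ∃ hi : i < r.length, bumpRow r x = (r.set i x, some r[i]) ∧
        x < r[i] ∧ ∀ k (hk : k < i), r[k] ≤ x := by
  rcases h : r.findIdx? (x < ·) with _ | i
  · left
    exact ⟨by simp only [bumpRow, h], by simpa using h⟩
  · right
    obtain ⟨hi, hxi, hk⟩ := List.findIdx?_eq_some_iff_getElem.mp h
    refine ⟨i, hi, by simp [bumpRow, h, hi], by simpa using hxi, fun k hk' => ?_⟩
    simpa using hk k hk'

theorem bumpRow_snd_eq_none_iff : (bumpRow r x).2 = none ↔ ∀ z ∈ r, z ≤ x := by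
  rcases bumpRow_cases r x with ⟨h, hle⟩ | ⟨i, hi, h, hxi, -⟩
  · simpa [h] using hle
  · simp only [h, reduceCtorEq, false_iff, not_forall, not_le]
    exact ⟨r[i], List.getElem_mem hi, hxi⟩

theorem mem_bumpRow_fst_self : x ∈ (bumpRow r x).1 := by
  rcases bumpRow_cases r x with ⟨h, -⟩ | ⟨i, hi, h, -⟩
  · simp [h]
  · simp [h, List.mem_set hi]

theorem eq_or_mem_of_mem_bumpRow_fst (hz : z ∈ (bumpRow r x).1) : z = x ∨ z ∈ r := by
  rcases bumpRow_cases r x with ⟨h, -⟩ | ⟨i, hi, h, -⟩ <;> rw [h] at hz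
  · simpa [or_comm] using hz
  · exact (List.mem_or_eq_of_mem_set hz).symm

theorem mem_and_lt_of_bumpRow_snd_eq_some (hu : (bumpRow r x).2 = some u) : u ∈ r ∧ x < u := by
  rcases bumpRow_cases r x with ⟨h, -⟩ | ⟨i, hi, h, hxi, -⟩ <;>
    simp only [h, reduceCtorEq, Option.some.injEq] at hu
  exact hu ▸ ⟨List.getElem_mem hi, hxi⟩

theorem le_of_bumpRow_snd_eq_some (hr : r.SortedLE) (hu : (bumpRow r x).2 = some u)
    (hz : z ∈ r) (hxz : x < z) : u ≤ z := by
  rcases bumpRow_cases r x with ⟨h, -⟩ | ⟨i, hi, h, -, hk⟩ <;>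
    simp only [h, reduceCtorEq, Option.some.injEq] at hu
  obtain ⟨j, hj, rfl⟩ := List.getElem_of_mem hz
  subst hu
  rcases lt_or_ge j i with hji | hij
  · exact absurd (hk j hji) (not_le.mpr hxz)
  · exact hr.getElem_le_getElem_of_le hij

theorem sortedLE_bumpRow_fst (hr : r.SortedLE) : (bumpRow r x).1.SortedLE := by
  rcases bumpRow_cases r x with ⟨h, hle⟩ | ⟨i, hi, h, hxi, hk⟩ <;> rw [h]
  · simpa [List.sortedLE_iff_pairwise, List.pairwise_append] using ⟨hr.pairwise, hle⟩
  · refine List.sortedLE_of_getElem_le_getElem_of_le fun a b ha hb hab => ?_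
    have := hr.getElem_le_getElem_of_le (i := a) (j := b)
    grind

theorem length_bumpRow_fst :
    (bumpRow r x).1.length = r.length + if (bumpRow r x).2 = none then 1 else 0 := by
  rcases bumpRow_cases r x with ⟨h, -⟩ | ⟨i, hi, h, -⟩ <;> simp [h]

end BumpRow

def insertDepth : List (List ℕ) → ℕ → ℕ
  | [], _ => 0
  | r :: rs, x =>
    match bumpRow r x with
    | (_, none) => 0
    | (_, some y) => insertDepth rs y + 1

section Insert

variable {P rs : List (List ℕ)} {r r' : List ℕ} {x y u : ℕ}

theorem insertT_cons_of_bumpRow_eq_none (h : bumpRow r x = (r', none)) :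
    insertT (r :: rs) x = r' :: rs := by
  simp [insertT, h]

theorem insertT_cons_of_bumpRow_eq_some (h : bumpRow r x = (r', some u)) :
    insertT (r :: rs) x = r' :: insertT rs u := by
  simp [insertT, h]

theorem insertDepth_cons_of_bumpRow_eq_none (h : bumpRow r x = (r', none)) :
    insertDepth (r :: rs) x = 0 := by
  simp [insertDepth, h]

theorem insertDepth_cons_of_bumpRow_eq_some (h : bumpRow r x = (r', some u)) :
    insertDepth (r :: rs) x = insertDepth rs u + 1 := by
  simp [insertDepth, h]

theorem insertDepth_cons_pos_iff : 0 < insertDepth (r :: rs) y ↔ ∃ z ∈ r, y < z := by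
  have := bumpRow_snd_eq_none_iff (r := r) (x := y)
  rcases h : bumpRow r y with ⟨r', _ | v⟩ <;> simp only [h] at this
  · simpa [insertDepth_cons_of_bumpRow_eq_none h] using this
  · simpa [insertDepth_cons_of_bumpRow_eq_some h] using this

theorem sortedLE_of_mem_insertT (hP : ∀ r ∈ P, r.SortedLE) (x : ℕ) :
    ∀ r ∈ insertT P x, r.SortedLE := by
  induction P generalizing x with
  | nil => simp [insertT, List.sortedLE_iff_pairwise]
  | cons r rs ih =>
    have hr' := sortedLE_bumpRow_fst (hP r (by simp)) (x := x)
    have hrs : ∀ s ∈ rs, s.SortedLE := fun s hs => hP s (by simp [hs])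
    rcases h : bumpRow r x with ⟨r', _ | u⟩ <;> rw [h] at hr'
    · simpa [insertT_cons_of_bumpRow_eq_none h, hr'] using hrs
    · simpa [insertT_cons_of_bumpRow_eq_some h, hr'] using ih hrs u

theorem insertDepth_lt_insertDepth_insertT_iff (hP : ∀ r ∈ P, r.SortedLE) (x y : ℕ) :
    insertDepth P x < insertDepth (insertT P x) y ↔ y < x := by
  induction P generalizing x y with
  | nil =>
    change 0 < insertDepth ([x] :: []) y ↔ y < x
    simp [insertDepth_cons_pos_iff]
  | cons r rs ih =>
    have hr := hP r (by simp)
    have hx := mem_bumpRow_fst_self (r := r) (x := x)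
    have hr' := sortedLE_bumpRow_fst hr (x := x)
    have hsub := fun z => eq_or_mem_of_mem_bumpRow_fst (r := r) (x := x) (z := z)
    rcases h : bumpRow r x with ⟨r', _ | u⟩ <;> simp only [h] at hx hr' hsub
    · have hle : ∀ z ∈ r', z ≤ x := fun z hz => by
        rcases hsub z hz with rfl | hz
        exacts [le_rfl, bumpRow_snd_eq_none_iff.mp (by rw [h]) z hz]
      rw [insertDepth_cons_of_bumpRow_eq_none h, insertT_cons_of_bumpRow_eq_none h,
        insertDepth_cons_pos_iff]
      exact ⟨fun ⟨z, hz, hyz⟩ => hyz.trans_le (hle z hz), fun hyx => ⟨x, hx, hyx⟩⟩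
    · obtain ⟨-, hxu⟩ := mem_and_lt_of_bumpRow_snd_eq_some (r := r) (x := x) (by rw [h])
      rw [insertDepth_cons_of_bumpRow_eq_some h, insertT_cons_of_bumpRow_eq_some h]
      rcases h' : bumpRow r' y with ⟨r'', _ | v⟩
      · rw [insertDepth_cons_of_bumpRow_eq_none h']
        simp only [Nat.not_lt_zero, false_iff, not_lt]
        exact bumpRow_snd_eq_none_iff.mp (by rw [h']) x hx
      · obtain ⟨hvr', hyv⟩ := mem_and_lt_of_bumpRow_snd_eq_some (r := r') (by rw [h'])
        rw [insertDepth_cons_of_bumpRow_eq_some h', Nat.add_lt_add_iff_right,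
          ih (fun s hs => hP s (by simp [hs]))]
        constructor
        · intro hvu
          by_contra! hxy
          rcases hsub v hvr' with rfl | hvr
          · exact absurd hyv (not_lt.mpr hxy)
          · exact absurd (le_of_bumpRow_snd_eq_some hr (by rw [h]) hvr (hxy.trans_lt hyv))
              (not_le.mpr hvu)
        · intro hyx
          exact (le_of_bumpRow_snd_eq_some hr' (by rw [h']) hx hyx).trans_lt hxu

end Insert

section Shape

variable {P : List (List ℕ)}

theorem insertDepth_le_length (x : ℕ) : insertDepth P x ≤ P.length := by
  induction P generalizing x with
  | nil => simp [insertDepth]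
  | cons r rs ih =>
    rcases h : bumpRow r x with ⟨r', _ | u⟩
    · simp [insertDepth_cons_of_bumpRow_eq_none h]
    · simpa [insertDepth_cons_of_bumpRow_eq_some h] using ih u

theorem length_insertT (x : ℕ) : (insertT P x).length = max P.length (insertDepth P x + 1) := by
  induction P generalizing x with
  | nil => simp [insertT, insertDepth]
  | cons r rs ih =>
    rcases h : bumpRow r x with ⟨r', _ | u⟩
    · simp [insertDepth_cons_of_bumpRow_eq_none h, insertT_cons_of_bumpRow_eq_none h]
    · simp [insertDepth_cons_of_bumpRow_eq_some h, insertT_cons_of_bumpRow_eq_some h, ih]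

theorem length_getD_insertT (x i : ℕ) :
    ((insertT P x).getD i []).length =
      (P.getD i []).length + if i = insertDepth P x then 1 else 0 := by
  induction P generalizing x i with
  | nil => cases i <;> simp [insertT, insertDepth]
  | cons r rs ih =>
    have hlen := length_bumpRow_fst (r := r) (x := x)
    rcases h : bumpRow r x with ⟨r', _ | u⟩ <;> simp only [h] at hlen
    · cases i <;> simp [insertDepth_cons_of_bumpRow_eq_none h, insertT_cons_of_bumpRow_eq_none h,
        hlen]
    · cases i <;> simp only [insertDepth_cons_of_bumpRow_eq_some h,
        insertT_cons_of_bumpRow_eq_some h, List.getD_cons_zero, List.getD_cons_succ, ih] <;>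
        simp [hlen]

theorem newRowIdx_insertT (x : ℕ) : newRowIdx P (insertT P x) = insertDepth P x := by
  rw [newRowIdx, List.headD_eq_head?_getD, List.head?_filter, List.find?_range_eq_some.mpr]
  · rfl
  refine ⟨?_, by simp [length_insertT], fun j hj => ?_⟩
  · rw [length_getD_insertT, if_pos rfl]
    simp
  · rw [length_getD_insertT, if_neg hj.ne]
    simp

end Shape

theorem List.findIdx_set_of_eq {α : Type*} {l : List α} {p : α → Bool} {d : ℕ} {a : α}
    (hd : d < l.length) (h : p a = p l[d]) : (l.set d a).findIdx p = l.findIdx p := by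
  have hmap : (l.map p).set d (p a) = l.map p := by
    refine List.ext_getElem (by simp) fun i _ _ => ?_
    rw [List.getElem_set]
    split <;> simp_all
  calc (l.set d a).findIdx p = ((l.map p).set d (p a)).findIdx id := by
        rw [← List.map_set, List.findIdx_map]; rfl
    _ = l.findIdx p := by rw [hmap, List.findIdx_map]; rfl

section Recording

variable {Q : List (List ℕ)} {d t v : ℕ}

theorem mem_flatten_addEntry : v ∈ (addEntry Q d t).flatten ↔ v ∈ Q.flatten ∨ v = t := by
  unfold addEntry
  split_ifs with hd
  · rw [List.set_eq_take_append_cons_drop, if_pos hd, List.getD_eq_getElem _ _ hd]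
    conv_rhs => rw [← List.take_append_drop d Q, List.drop_eq_getElem_cons hd]
    simp only [List.flatten_append, List.flatten_cons, List.mem_append, List.mem_singleton]
    tauto
  · simp

theorem length_addEntry (hd : d ≤ Q.length) : (addEntry Q d t).length = max Q.length (d + 1) := by
  unfold addEntry
  split_ifs with h <;> simp <;> omega

theorem rowOf_addEntry_self (hd : d ≤ Q.length) (ht : t ∉ Q.flatten) :
    rowOf (addEntry Q d t) t = d := by
  have hrows : ∀ j (hj : j < Q.length), Q[j].contains t = false := fun j hj => by
    simpa using fun h => ht (List.mem_flatten.mpr ⟨Q[j], List.getElem_mem hj, h⟩)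
  unfold addEntry rowOf
  split_ifs with h
  · rw [List.findIdx_eq (by simpa using h)]
    refine ⟨by simp, fun j hj => ?_⟩
    rw [List.getElem_set_ne hj.ne']
    exact hrows j (hj.trans h)
  · have hlen : Q.findIdx (·.contains t) = Q.length := List.findIdx_eq_length.mpr fun r hr => by
      obtain ⟨j, hj, rfl⟩ := List.getElem_of_mem hr
      exact hrows j hj
    rw [List.findIdx_append, hlen, if_neg (lt_irrefl _)]
    simp
    omega

theorem rowOf_addEntry_of_mem (hv : v ∈ Q.flatten) (hvt : v ≠ t) :
    rowOf (addEntry Q d t) v = rowOf Q v := by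
  unfold addEntry rowOf
  split_ifs with h
  · exact List.findIdx_set_of_eq h (by rw [List.getD_eq_getElem _ _ h]; simp [hvt])
  · rw [List.findIdx_append, if_pos]
    simpa using List.mem_flatten.mp hv

end Recording

section RSK

variable {P Q : List (List ℕ)} {t : ℕ}

theorem rskAux_cons (P Q : List (List ℕ)) (t x : ℕ) (xs : List ℕ) :
    rskAux P Q t (x :: xs) = rskAux (insertT P x) (addEntry Q (insertDepth P x) t) (t + 1) xs := by
  rw [rskAux, newRowIdx_insertT]

theorem forall_mem_flatten_addEntry_lt (ht : ∀ u ∈ Q.flatten, u < t) (d : ℕ) :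
    ∀ u ∈ (addEntry Q d t).flatten, u < t + 1 := by
  intro u hu
  rcases mem_flatten_addEntry.mp hu with hu | rfl
  exacts [(ht u hu).trans (Nat.lt_succ_self _), Nat.lt_succ_self _]

theorem rowOf_rskAux_of_mem (xs : List ℕ) {v : ℕ} (hv : v ∈ Q.flatten)
    (ht : ∀ u ∈ Q.flatten, u < t) : rowOf (rskAux P Q t xs) v = rowOf Q v := by
  induction xs generalizing P Q t with
  | nil => rfl
  | cons x xs ih =>
    rw [rskAux_cons, ih (mem_flatten_addEntry.mpr (.inl hv)) (forall_mem_flatten_addEntry_lt ht _),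
      rowOf_addEntry_of_mem hv (ht v hv).ne]

theorem rowOf_rskAux_add {xs : List ℕ} {k : ℕ} (hP : ∀ r ∈ P, r.SortedLE)
    (hQ : Q.length = P.length) (ht : ∀ u ∈ Q.flatten, u < t) (hk : k < xs.length) :
    rowOf (rskAux P Q t xs) (t + k) = insertDepth ((xs.take k).foldl insertT P) xs[k] := by
  induction xs generalizing P Q t k with
  | nil => simp at hk
  | cons x xs ih =>
    have hd : insertDepth P x ≤ Q.length := hQ ▸ insertDepth_le_length x
    rw [rskAux_cons]
    cases k with
    | zero =>
      simp only [Nat.add_zero]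
      rw [rowOf_rskAux_of_mem xs (mem_flatten_addEntry.mpr (.inr rfl))
        (forall_mem_flatten_addEntry_lt ht _), rowOf_addEntry_self hd fun h => (ht t h).false]
      simp
    | succ k =>
      rw [← Nat.add_assoc, Nat.add_right_comm, ih (sortedLE_of_mem_insertT hP x)
        (by rw [length_addEntry hd, length_insertT, hQ]) (forall_mem_flatten_addEntry_lt ht _)
        (by simpa using hk)]
      simp

theorem sortedLE_of_mem_foldl_insertT (l : List ℕ) (hP : ∀ r ∈ P, r.SortedLE) :
    ∀ r ∈ l.foldl insertT P, r.SortedLE := by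
  induction l generalizing P with
  | nil => exact hP
  | cons x l ih => exact ih (sortedLE_of_mem_insertT hP x)

theorem rowOf_rskQ_add_one {w : List ℕ} {k : ℕ} (hk : k < w.length) :
    rowOf (rskQ w) (k + 1) = insertDepth ((w.take k).foldl insertT []) w[k] := by
  rw [add_comm, rskQ, rowOf_rskAux_add (by simp) rfl (by simp) hk]

end RSK

/-- Positions in `w` are 0-based while the entries of `Q(w)` are `1, …, n`, so the descent at
position `i` is compared with the rows of the entries `i + 1` and `i + 2`. -/
theorem descents_eq_descents_rskQ_general (w : List ℕ) :
    ∀ i, i + 1 < w.length →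
      (w.getD (i + 1) 0 < w.getD i 0 ↔ rowOf (rskQ w) (i + 1) < rowOf (rskQ w) (i + 2)) := by
  intro i hi
  have hi' : i < w.length := by omega
  have hP := sortedLE_of_mem_foldl_insertT (w.take i) (P := []) (by simp)
  rw [List.getD_eq_getElem _ _ hi, List.getD_eq_getElem _ _ hi', rowOf_rskQ_add_one hi',
    rowOf_rskQ_add_one hi, List.take_succ_eq_append_getElem hi', List.foldl_append]
  exact (insertDepth_lt_insertDepth_insertT_iff hP _ _).symm

/-- For any word `w` of positive integers, the descent set of `w` equals the descent set
of the recording tableau `Q(w)` under RSK: position `i` is a descent of `w` iff the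
entry `i+1` lies in a strictly lower row of `Q(w)` than the entry `i`
(entries of `Q(w)` are `1,…,n`; positions here are 0-based). -/
theorem descents_eq_descents_rskQ (w : List ℕ) (hpos : ∀ x ∈ w, 0 < x) :
    ∀ i, i + 1 < w.length →
      (w.getD (i + 1) 0 < w.getD i 0 ↔ rowOf (rskQ w) (i + 1) < rowOf (rskQ w) (i + 2)) :=
  descents_eq_descents_rskQ_general w
end
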